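/- arXiv:2404.17705 — 3 statements merged into one kernel-verified Lean document; each statement's English description precedes it below -/
import Mathlib

section
/- Let r ∈ ℕ with r ≥ 2 and p ∈ (0,1). Let N₁ be negative binomial with parameters r+1 and p, and N₂ be negative binomial with parameters r−1 and 1−p, independent. Then the odds estimator ĝ = (r/(N₁−1))·(N₂/(r−1)) is unbiased for the odds: E[ĝ] = p/(1−p). Explicitly, Σ_{n₁≥r+1} Σ_{n₂≥r−1} C(n₁−1, r) p^{r+1} (1−p)^{n₁−r−1} · C(n₂−1, r−2) (1−p)^{r−1} p^{n₂−r+1} · (r/(n₁−1))·(n₂/(r−1)) = p/(1−p). -/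
open scoped BigOperators

/-- Expectation of `f(N)` where `N` is negative binomial with parameters `s` and `q`:
`E[f(N)] = Σ_{n ≥ s} f(n) C(n−1, s−1) q^s (1−q)^{n−s}`, written with `n = s + k`. -/
noncomputable def negbinExp (s : ℕ) (q : ℝ) (f : ℕ → ℝ) : ℝ :=
  ∑' k : ℕ, ((s + k - 1).choose (s - 1) : ℝ) * q ^ s * (1 - q) ^ k * f (s + k)

/-- Expectation of `f(N₁, N₂)` for independent negative binomials with parameters
`(s₁, q₁)` and `(s₂, q₂)`. -/
noncomputable def negbinExp2 (s₁ : ℕ) (q₁ : ℝ) (s₂ : ℕ) (q₂ : ℝ) (f : ℕ → ℕ → ℝ) : ℝ :=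
  ∑' k₁ : ℕ, ∑' k₂ : ℕ,
    ((s₁ + k₁ - 1).choose (s₁ - 1) : ℝ) * q₁ ^ s₁ * (1 - q₁) ^ k₁ *
      (((s₂ + k₂ - 1).choose (s₂ - 1) : ℝ) * q₂ ^ s₂ * (1 - q₂) ^ k₂) *
      f (s₁ + k₁) (s₂ + k₂)

/-- The m-th harmonic number `H_m = Σ_{k=1}^m 1/k`, `H_0 = 0`. -/
noncomputable def H (m : ℕ) : ℝ := ∑ k ∈ Finset.range m, (1 : ℝ) / (k + 1)

/-- The odds estimator `ĝ = (r/(N₁−1))·(N₂/(r−1))`. -/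
noncomputable def ghat (r : ℕ) (n₁ n₂ : ℕ) : ℝ :=
  ((r : ℝ) / ((n₁ : ℝ) - 1)) * ((n₂ : ℝ) / ((r : ℝ) - 1))

/-!
By independence the expectation factors as `E[r/(N₁-1)] · E[N₂]/(r-1)`. The identity
`(n+1) C(n,k) = C(n+1,k+1) (k+1)` turns each factor into the total mass of a negative binomial
with a shifted parameter, giving `E[(s-1)/(N-1)] = q` and `E[N] = s/q` for `N ~ NB(s, q)`.
-/

theorem hasSum_negbin_weight {s : ℕ} (hs : 0 < s) {q : ℝ} (hq : |1 - q| < 1) :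
    HasSum (fun k : ℕ => ((s + k - 1).choose (s - 1) : ℝ) * q ^ s * (1 - q) ^ k) 1 := by
  obtain ⟨t, rfl⟩ : ∃ t, s = t + 1 := ⟨s - 1, by omega⟩
  have hq₀ : q ≠ 0 := by rintro rfl; norm_num at hq
  have h := (hasSum_choose_mul_geometric_of_norm_lt_one t (r := 1 - q) hq).mul_left (q ^ (t + 1))
  rw [sub_sub_cancel, mul_one_div_cancel (pow_ne_zero _ hq₀)] at h
  refine h.congr_fun fun k => ?_
  rw [show t + 1 + k - 1 = k + t by omega, Nat.add_sub_cancel]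
  ring

theorem negbinExp_id {s : ℕ} (hs : 0 < s) {q : ℝ} (hq : |1 - q| < 1) :
    negbinExp s q (fun n => n) = s / q := by
  obtain ⟨t, rfl⟩ : ∃ t, s = t + 1 := ⟨s - 1, by omega⟩
  have hq₀ : q ≠ 0 := by rintro rfl; norm_num at hq
  have h := (hasSum_negbin_weight (s := t + 2) (by omega) hq).mul_left ((t + 1 : ℕ) / q)
  rw [mul_one] at h
  refine HasSum.tsum_eq (h.congr_fun fun k => ?_)
  have hchoose :
      ((t + k + 1 : ℕ) : ℝ) * (t + k).choose t = (t + k + 1).choose (t + 1) * (t + 1 : ℕ) :=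
    mod_cast Nat.add_one_mul_choose_eq (t + k) t
  rw [show t + 1 + k - 1 = t + k by omega, show t + 2 + k - 1 = t + k + 1 by omega,
    Nat.add_sub_cancel, show t + 2 - 1 = t + 1 by omega, show t + 1 + k = t + k + 1 by omega]
  field_simp
  linear_combination q * (1 - q) ^ k * q ^ (t + 1) * hchoose

theorem negbinExp_succ_inv_pred {s : ℕ} (hs : 0 < s) {q : ℝ} (hq : |1 - q| < 1) :
    negbinExp (s + 1) q (fun n => s / (n - 1)) = q := by
  obtain ⟨t, rfl⟩ : ∃ t, s = t + 1 := ⟨s - 1, by omega⟩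
  have h := (hasSum_negbin_weight (s := t + 1) hs hq).mul_left q
  rw [mul_one] at h
  refine HasSum.tsum_eq (h.congr_fun fun k => ?_)
  have hchoose :
      ((t + k + 1 : ℕ) : ℝ) * (t + k).choose t = (t + k + 1).choose (t + 1) * (t + 1 : ℕ) :=
    mod_cast Nat.add_one_mul_choose_eq (t + k) t
  have hfrac : ((t + k + 1).choose (t + 1) : ℝ) *
      ((t + 1 : ℕ) / (((t + 1 + 1 + k : ℕ) : ℝ) - 1)) = (t + k).choose t := by
    have hden : ((t + 1 + 1 + k : ℕ) : ℝ) - 1 = t + k + 1 := by push_cast; ring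
    rw [hden, mul_div_assoc', div_eq_iff (by positivity)]
    push_cast at hchoose ⊢
    linear_combination -hchoose
  rw [show t + 1 + k - 1 = t + k by omega, show t + 1 + 1 + k - 1 = t + k + 1 by omega,
    Nat.add_sub_cancel, Nat.add_sub_cancel]
  linear_combination q ^ (t + 2) * (1 - q) ^ k * hfrac

theorem negbinExp_div_const (s : ℕ) (q : ℝ) (f : ℕ → ℝ) (c : ℝ) :
    negbinExp s q (fun n => f n / c) = negbinExp s q f / c := by
  simp only [negbinExp, mul_div_assoc', tsum_div_const]

theorem negbinExp2_mul (s₁ : ℕ) (q₁ : ℝ) (s₂ : ℕ) (q₂ : ℝ) (f g : ℕ → ℝ) :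
    negbinExp2 s₁ q₁ s₂ q₂ (fun n₁ n₂ => f n₁ * g n₂) = negbinExp s₁ q₁ f * negbinExp s₂ q₂ g := by
  unfold negbinExp2 negbinExp
  rw [← tsum_mul_right]
  refine tsum_congr fun k₁ => ?_
  rw [← tsum_mul_left]
  refine tsum_congr fun k₂ => ?_
  ring

theorem odds_estimator_unbiased (r : ℕ) (hr : 2 ≤ r) (p : ℝ) (hp0 : 0 < p) (hp1 : p < 1) :
    negbinExp2 (r + 1) p (r - 1) (1 - p) (ghat r) = p / (1 - p) := by
  have hp : |1 - p| < 1 := abs_lt.2 ⟨by linarith, by linarith⟩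
  have hp' : |1 - (1 - p)| < 1 := by rw [sub_sub_cancel]; exact abs_lt.2 ⟨by linarith, hp1⟩
  have hr₁ : ((r - 1 : ℕ) : ℝ) = r - 1 := by rw [Nat.cast_sub (by omega), Nat.cast_one]
  have hr₁₀ : (r : ℝ) - 1 ≠ 0 := by rw [← hr₁]; exact_mod_cast (by omega : r - 1 ≠ 0)
  calc negbinExp2 (r + 1) p (r - 1) (1 - p) (ghat r)
      = negbinExp (r + 1) p (fun n => r / (n - 1)) *
          (negbinExp (r - 1) (1 - p) (fun n => n) / (r - 1)) := by
        rw [← negbinExp_div_const, ← negbinExp2_mul]; rfl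
    _ = p * ((r - 1 : ℕ) / (1 - p) / (r - 1)) := by
        rw [negbinExp_succ_inv_pred (by omega) hp, negbinExp_id (by omega) hp']
    _ = p / (1 - p) := by
        rw [hr₁]; field_simp
end

section
/- Let r ∈ ℕ with r ≥ 2 and p ∈ (0,1), and let N be negative binomial with parameters r and p. Then the estimator λ̂ = −H_{N−1} + H_{r−1} is an unbiased estimator of log p: Σ_{n≥r} C(n−1, r−1) p^r (1−p)^{n−r} (H_{r−1} − H_{n−1}) = log p. -/
open scoped BigOperators

lemma H_succ (n : ℕ) : H (n + 1) = H n + 1 / (n + 1) := by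
  simp [H, Finset.sum_range_succ]

lemma key (s : ℕ) : ∀ k : ℕ,
    ∑ m ∈ Finset.range (k + 1), ((s + k - m).choose s : ℝ) / m
      = ((s + k).choose s : ℝ) * (H (s + k) - H s) := by
  induction s with
  | zero =>
    intro k
    simp only [Nat.zero_add, Nat.choose_zero_right, Nat.cast_one, one_mul]
    rw [Finset.sum_range_succ']
    simp [H]
  | succ s ihs =>
    intro k
    induction k with
    | zero => simp
    | succ k ihk =>
      have h1 : ∀ m ∈ Finset.range (k + 2),
          ((s + 1 + (k + 1) - m).choose (s + 1) : ℝ) / m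
            = ((s + (k + 1) - m).choose s : ℝ) / m
              + ((s + 1 + k - m).choose (s + 1) : ℝ) / m := by
        intro m hm
        simp only [Finset.mem_range] at hm
        have e1 : s + 1 + (k + 1) - m = (s + (k + 1) - m) + 1 := by omega
        have e2 : s + 1 + k - m = s + (k + 1) - m := by omega
        rw [e1, Nat.choose_succ_succ, e2]
        push_cast
        ring
      rw [Finset.sum_congr rfl h1, Finset.sum_add_distrib, ihs (k + 1)]
      rw [Finset.sum_range_succ]
      have hz : ((s + 1 + k - (k + 1)).choose (s + 1) : ℝ) = 0 := by
        have : s + 1 + k - (k + 1) = s := by omega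
        rw [this]
        exact_mod_cast Nat.cast_eq_zero.mpr (Nat.choose_eq_zero_of_lt (by omega))
      rw [hz, zero_div, add_zero, ihk]
      -- now pure algebra
      have hP : ((s + k + 2).choose (s + 1) : ℝ)
          = ((s + k + 1).choose s : ℝ) + ((s + k + 1).choose (s + 1) : ℝ) := by
        have : s + k + 2 = (s + k + 1) + 1 := by omega
        rw [this, Nat.choose_succ_succ]
        push_cast; ring
      have hC : ((s + k + 1).choose (s + 1) : ℝ) * (s + 1)
          = ((s + k + 1).choose s : ℝ) * (k + 1) := by
        have := Nat.choose_succ_right_eq (s + k + 1) s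
        have e : s + k + 1 - s = k + 1 := by omega
        rw [e] at this
        exact_mod_cast this
      have e3 : s + (k + 1) = s + k + 1 := by omega
      have e4 : s + 1 + k = s + k + 1 := by omega
      have e5 : s + 1 + (k + 1) = s + k + 2 := by omega
      rw [e3, e4, e5, hP]
      have h6 : H (s + k + 2) = H (s + k + 1) + 1 / ((s : ℝ) + k + 2) := by
        rw [show s + k + 2 = (s + k + 1) + 1 by omega, H_succ]; push_cast; ring
      have h7 : H (s + 1) = H s + 1 / ((s : ℝ) + 1) := by
        rw [H_succ]
      rw [h6, h7]
      have ha : (s : ℝ) + 1 ≠ 0 := by positivity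
      have hb : (s : ℝ) + k + 2 ≠ 0 := by positivity
      have key2 : ((s + k + 1).choose s : ℝ) / ((s : ℝ) + 1)
          = (((s + k + 1).choose s : ℝ) + ((s + k + 1).choose (s + 1) : ℝ)) / ((s : ℝ) + k + 2) := by
        rw [div_eq_div_iff ha hb]
        linear_combination -hC
      linear_combination key2

theorem log_p_estimator_unbiased (r : ℕ) (hr : 2 ≤ r) (p : ℝ) (hp0 : 0 < p) (hp1 : p < 1) :
    negbinExp r p (fun n => H (r - 1) - H (n - 1)) = Real.log p := by
  obtain ⟨s, rfl⟩ : ∃ s, r = s + 1 := ⟨r - 1, by omega⟩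
  set q : ℝ := 1 - p with hq
  have hq0 : 0 < q := by simp [hq]; linarith
  have hq1 : q < 1 := by simp [hq]; linarith
  have habs : |q| < 1 := abs_lt.mpr ⟨by linarith, hq1⟩
  have hnorm : ‖q‖ < 1 := by rwa [Real.norm_eq_abs]
  set a : ℕ → ℝ := fun n => q ^ n / n with ha_def
  set b : ℕ → ℝ := fun n => ((n + s).choose s : ℝ) * q ^ n with hb_def
  -- summability of a
  have haS : Summable a := by
    rw [← summable_nat_add_iff 1]
    have := (Real.hasSum_pow_div_log_of_abs_lt_one habs).summable
    refine this.congr fun n => ?_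
    simp [ha_def]
  have hp : (1 : ℝ) - q = p := by rw [hq]; ring
  have haT : HasSum a (-Real.log p) := by
    have h1 := Real.hasSum_pow_div_log_of_abs_lt_one habs
    rw [hp] at h1
    have hfun : (fun n : ℕ => a (n + 1)) = fun n : ℕ => q ^ (n + 1) / (n + 1) := by
      funext n; simp [ha_def]
    have h2 : HasSum (fun n => a (n + 1)) (-Real.log p) := by rw [hfun]; exact h1
    have h3 := (hasSum_nat_add_iff 1).mp h2
    simpa [ha_def] using h3
  have hbT : HasSum b (1 / p ^ (s + 1)) := by
    have := hasSum_choose_mul_geometric_of_norm_lt_one (𝕜 := ℝ) s hnorm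
    rwa [hp] at this
  have hbS : Summable b := hbT.summable
  have haN : Summable fun n => ‖a n‖ := by
    refine haS.abs.congr fun n => ?_
    simp [Real.norm_eq_abs]
  have hbN : Summable fun n => ‖b n‖ := by
    refine hbS.abs.congr fun n => ?_
    simp [Real.norm_eq_abs]
  -- Cauchy product
  have hCp := tsum_mul_tsum_eq_tsum_sum_range_of_summable_norm haN hbN
  rw [haT.tsum_eq, hbT.tsum_eq] at hCp
  -- identify terms
  have hterm : ∀ k : ℕ,
      ((s + 1 + k - 1).choose (s + 1 - 1) : ℝ) * p ^ (s + 1) * (1 - p) ^ k *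
          (H (s + 1 - 1) - H (s + 1 + k - 1))
        = (-p ^ (s + 1)) * ∑ m ∈ Finset.range (k + 1), a m * b (k - m) := by
    intro k
    have e1 : s + 1 + k - 1 = s + k := by omega
    have e2 : s + 1 - 1 = s := by omega
    have e3 : ∀ m ∈ Finset.range (k + 1), a m * b (k - m)
        = ((s + k - m).choose s : ℝ) / m * q ^ k := by
      intro m hm
      simp only [Finset.mem_range] at hm
      have e4 : k - m + s = s + k - m := by omega
      have e5 : (q : ℝ) ^ m / m * (((s + k - m).choose s : ℝ) * q ^ (k - m))
          = ((s + k - m).choose s : ℝ) / m * (q ^ m * q ^ (k - m)) := by ring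
      simp only [ha_def, hb_def, e4]
      rw [e5, ← pow_add, show m + (k - m) = k by omega]
    rw [e1, e2, Finset.sum_congr rfl e3, ← Finset.sum_mul, key s k]
    rw [show (1 : ℝ) - p = q from hq.symm]
    ring
  rw [negbinExp, tsum_congr hterm, tsum_mul_left, ← hCp]
  have hpne : p ^ (s + 1) ≠ 0 := by positivity
  field_simp
end

section
/- Let r, n ∈ ℕ with n > r ≥ 1, and let β = (−r + √(r²+1))/2. Then log((n − 1/2 + β)/(r − 1/2 + β)) < H_{n−1} − H_{r−1} < log((n − 1/2)/(r − 1/2)). -/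
open scoped BigOperators

section AuxHarmonic
open Real intervalIntegral

-- geometric mean bound: log(b/a) < (b-a)/sqrt(ab)
lemma log_lt_sub_div_sqrt {a b : ℝ} (ha : 0 < a) (hab : a < b) :
    Real.log (b / a) < (b - a) / Real.sqrt (a * b) := by
  have hb : 0 < b := ha.trans hab
  have hba : 1 < b / a := (one_lt_div ha).mpr hab
  set s : ℝ := Real.log (b / a) / 2 with hs_def
  have hs : 0 < s := by
    have := Real.log_pos hba
    positivity
  have hsinh : s < Real.sinh s := Real.self_lt_sinh_iff.mpr hs
  have h1 : Real.exp s = Real.sqrt (b / a) := by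
    rw [Real.sqrt_eq_rpow, Real.rpow_def_of_pos (by positivity)]
    congr 1; rw [hs_def]; ring
  have h2 : Real.exp (-s) = Real.sqrt (a / b) := by
    rw [Real.sqrt_eq_rpow, Real.rpow_def_of_pos (by positivity)]
    congr 1
    rw [hs_def, show a / b = (b / a)⁻¹ by rw [inv_div], Real.log_inv]
    ring
  have hsinh_eq : Real.sinh s = (Real.sqrt (b / a) - Real.sqrt (a / b)) / 2 := by
    rw [Real.sinh_eq, h1, h2]
  have hkey : Real.log (b / a) < Real.sqrt (b / a) - Real.sqrt (a / b) := by
    rw [hsinh_eq] at hsinh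
    rw [hs_def] at hsinh
    linarith
  have hsa : (0:ℝ) < Real.sqrt a := Real.sqrt_pos.mpr ha
  have hsb : (0:ℝ) < Real.sqrt b := Real.sqrt_pos.mpr hb
  have heq : Real.sqrt (b / a) - Real.sqrt (a / b) = (b - a) / Real.sqrt (a * b) := by
    rw [Real.sqrt_div' b ha.le, Real.sqrt_div' a hb.le, Real.sqrt_mul ha.le,
      div_sub_div _ _ hsa.ne' hsb.ne', Real.mul_self_sqrt ha.le, Real.mul_self_sqrt hb.le]
  linarith [heq ▸ hkey]

-- midpoint rule: 1/x < log(x+1/2) - log(x-1/2) for x ≥ 1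
lemma one_div_lt_log_sub {x : ℝ} (hx : 1 ≤ x) :
    1 / x < Real.log (x + 1/2) - Real.log (x - 1/2) := by
  have hx0 : 0 < x := by linarith
  have ha : (0:ℝ) < x - 1/2 := by linarith
  have hab : x - 1/2 < x + 1/2 := by linarith
  have hInt : (∫ t in (x - 1/2)..(x + 1/2), (2*x - t)/x^2) <
      ∫ t in (x - 1/2)..(x + 1/2), 1/t := by
    apply integral_lt_integral_of_continuousOn_of_le_of_exists_lt hab
    · fun_prop
    · apply ContinuousOn.div continuousOn_const continuousOn_id
      intro t ht
      exact ne_of_gt (lt_of_lt_of_le ha ht.1)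
    · intro t ht
      have ht0 : 0 < t := lt_of_lt_of_le ha ht.1.le
      rw [div_le_div_iff₀ (by positivity) ht0]
      nlinarith [sq_nonneg (t - x)]
    · refine ⟨x - 1/2, ⟨le_refl _, hab.le⟩, ?_⟩
      rw [div_lt_div_iff₀ (by positivity) ha]
      nlinarith
  have h1 : (∫ t in (x - 1/2)..(x + 1/2), (2*x - t)/x^2) = 1/x := by
    rw [intervalIntegral.integral_div,
      intervalIntegral.integral_sub intervalIntegrable_const intervalIntegral.intervalIntegrable_id,
      intervalIntegral.integral_const, integral_id]
    field_simp
    ring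
  have h2 : (∫ t in (x - 1/2)..(x + 1/2), 1/t) = Real.log (x + 1/2) - Real.log (x - 1/2) := by
    rw [integral_one_div, Real.log_div (by linarith) (by linarith)]
    intro h
    rcases Set.mem_uIcc.mp h with ⟨h1, _⟩ | ⟨h1, _⟩ <;> linarith
  rw [h1, h2] at hInt
  exact hInt

end AuxHarmonic

theorem harmonic_diff_log_bounds (r n : ℕ) (hr : 1 ≤ r) (hn : r < n) :
    Real.log (((n : ℝ) - 1 / 2 + (-(r : ℝ) + Real.sqrt ((r : ℝ) ^ 2 + 1)) / 2) /
          ((r : ℝ) - 1 / 2 + (-(r : ℝ) + Real.sqrt ((r : ℝ) ^ 2 + 1)) / 2)) <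
        H (n - 1) - H (r - 1) ∧
      H (n - 1) - H (r - 1) <
        Real.log (((n : ℝ) - 1 / 2) / ((r : ℝ) - 1 / 2)) := by
  set β : ℝ := (-(r : ℝ) + Real.sqrt ((r : ℝ) ^ 2 + 1)) / 2 with hβ_def
  have hrpos : (1:ℝ) ≤ r := by exact_mod_cast hr
  have hsq : Real.sqrt ((r:ℝ)^2 + 1) ^ 2 = (r:ℝ)^2 + 1 := Real.sq_sqrt (by positivity)
  have hβpos : 0 < β := by
    have : (r:ℝ) < Real.sqrt ((r:ℝ)^2 + 1) := by
      nlinarith [Real.sqrt_nonneg ((r:ℝ)^2 + 1)]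
    rw [hβ_def]; linarith
  have hβeq : β^2 + r*β = 1/4 := by
    have h2 : 2*β + r = Real.sqrt ((r:ℝ)^2+1) := by rw [hβ_def]; ring
    nlinarith [h2, hsq]
  -- sum representation
  have hrn : r - 1 < n - 1 := by omega
  have hS : H (n - 1) - H (r - 1) = ∑ i ∈ Finset.Ico (r-1) (n-1), (1:ℝ)/(i+1) := by
    rw [Finset.sum_Ico_eq_sub _ (by omega : r - 1 ≤ n - 1)]; rfl
  -- telescoping
  have tel : ∀ c : ℝ, ∑ i ∈ Finset.Ico (r-1) (n-1),
      (Real.log ((i:ℝ)+1+c) - Real.log ((i:ℝ)+c))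
      = Real.log (((n:ℝ)-1)+c) - Real.log (((r:ℝ)-1)+c) := by
    intro c
    have := Finset.sum_Ico_eq_sub (fun i => Real.log ((i:ℝ)+1+c) - Real.log ((i:ℝ)+c))
      (by omega : r - 1 ≤ n - 1)
    rw [this]
    have key : ∀ m : ℕ, ∑ i ∈ Finset.range m,
        (Real.log ((i:ℝ)+1+c) - Real.log ((i:ℝ)+c)) = Real.log ((m:ℝ)+c) - Real.log c := by
      intro m
      have := Finset.sum_range_sub (fun i : ℕ => Real.log ((i:ℝ)+c)) m
      simp only [Nat.cast_zero, zero_add] at this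
      rw [← this]
      apply Finset.sum_congr rfl
      intro i _
      push_cast
      ring_nf
    rw [key, key]
    have h1 : ((n - 1 : ℕ) : ℝ) = (n:ℝ) - 1 := by
      have : 1 ≤ n := by omega
      push_cast [this]; ring
    have h2 : ((r - 1 : ℕ) : ℝ) = (r:ℝ) - 1 := by push_cast [hr]; ring
    rw [h1, h2]; ring
  have hne : (Finset.Ico (r-1) (n-1)).Nonempty := by
    rw [Finset.nonempty_Ico]; omega
  constructor
  · -- lower bound
    have step : ∀ i ∈ Finset.Ico (r-1) (n-1),
        Real.log ((i:ℝ)+1+(1/2+β)) - Real.log ((i:ℝ)+(1/2+β)) < 1/((i:ℝ)+1) := by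
      intro i hi
      have hik : (r:ℝ) ≤ (i:ℝ) + 1 := by
        have := (Finset.mem_Ico.mp hi).1
        have : r ≤ i + 1 := by omega
        exact_mod_cast this
      set k : ℝ := (i:ℝ) + 1 with hk_def
      have hk1 : (1:ℝ) ≤ k := le_trans (by exact_mod_cast hr) hik
      have ha : (0:ℝ) < k - 1/2 + β := by linarith
      have hab : k - 1/2 + β < k + 1/2 + β := by linarith
      have hlt := log_lt_sub_div_sqrt ha hab
      have hprod : k^2 < (k - 1/2 + β) * (k + 1/2 + β) := by nlinarith
      have hsqrt : k < Real.sqrt ((k - 1/2 + β) * (k + 1/2 + β)) :=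
        (Real.lt_sqrt (by linarith)).mpr hprod
      have hfrac : (k + 1/2 + β - (k - 1/2 + β)) / Real.sqrt ((k - 1/2 + β) * (k + 1/2 + β))
          < 1 / k := by
        rw [show k + 1/2 + β - (k - 1/2 + β) = 1 by ring]
        apply one_div_lt_one_div_of_lt (by linarith) hsqrt
      have hlog : Real.log ((k + 1/2 + β)/(k - 1/2 + β))
          = Real.log ((i:ℝ)+1+(1/2+β)) - Real.log ((i:ℝ)+(1/2+β)) := by
        rw [Real.log_div (by positivity) (by positivity)]
        congr 1 <;> congr 1 <;> rw [hk_def] <;> ring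
      rw [← hlog]
      calc Real.log ((k + 1/2 + β)/(k - 1/2 + β))
          < (k + 1/2 + β - (k - 1/2 + β)) / Real.sqrt ((k - 1/2 + β) * (k + 1/2 + β)) := hlt
        _ < 1 / k := hfrac
    have hsum := Finset.sum_lt_sum_of_nonempty hne step
    rw [tel (1/2+β)] at hsum
    rw [hS]
    have hn12 : (0:ℝ) < (n:ℝ) - 1/2 + β := by
      have : (r:ℝ) < (n:ℝ) := by exact_mod_cast hn
      linarith
    have hr12 : (0:ℝ) < (r:ℝ) - 1/2 + β := by linarith
    rw [Real.log_div (by positivity) (by positivity)]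
    calc Real.log ((n:ℝ) - 1/2 + β) - Real.log ((r:ℝ) - 1/2 + β)
        = Real.log (((n:ℝ)-1)+(1/2+β)) - Real.log (((r:ℝ)-1)+(1/2+β)) := by
          congr 2 <;> ring
      _ < _ := hsum
  · -- upper bound
    have step : ∀ i ∈ Finset.Ico (r-1) (n-1),
        (1:ℝ)/((i:ℝ)+1) < Real.log ((i:ℝ)+1+(1/2:ℝ)) - Real.log ((i:ℝ)+(1/2:ℝ)) := by
      intro i _
      have h := one_div_lt_log_sub (x := (i:ℝ)+1) (by have : (0:ℝ) ≤ i := Nat.cast_nonneg i; linarith)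
      calc (1:ℝ)/((i:ℝ)+1) < Real.log ((i:ℝ)+1+1/2) - Real.log ((i:ℝ)+1-1/2) := h
        _ = Real.log ((i:ℝ)+1+(1/2:ℝ)) - Real.log ((i:ℝ)+(1/2:ℝ)) := by ring_nf
    have hsum := Finset.sum_lt_sum_of_nonempty hne step
    rw [tel (1/2)] at hsum
    rw [hS]
    have hn12 : (0:ℝ) < (n:ℝ) - 1/2 := by
      have : (r:ℝ) < (n:ℝ) := by exact_mod_cast hn
      linarith
    have hr12 : (0:ℝ) < (r:ℝ) - 1/2 := by linarith
    rw [Real.log_div (by positivity) (by positivity)]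
    calc (∑ i ∈ Finset.Ico (r-1) (n-1), (1:ℝ)/(i+1))
        < Real.log (((n:ℝ)-1)+(1/2:ℝ)) - Real.log (((r:ℝ)-1)+(1/2:ℝ)) := hsum
      _ = Real.log ((n:ℝ) - 1/2) - Real.log ((r:ℝ) - 1/2) := by congr 2 <;> ring
end
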